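/- arXiv:2206.12846 — 2 statements merged into one kernel-verified Lean document; each statement's English description precedes it below -/
import Mathlib

section
/- If Assumption (A1) holds and moreover the range W(Ω) is a closed subset of ℝ^{d×N}, then for every Q ∈ 𝒜 there exists a probability measure P on (Ω, σ(W)) such that Q = P∘W^{−1}; i.e. Assumption (A3) holds. -/
open MeasureTheory Filter

noncomputable section

/-- `ℝ^d` with the Euclidean norm. -/
abbrev Vec (d : ℕ) : Type := EuclideanSpace ℝ (Fin d)

/-- The backward recursion defining the sublinear expectation:
`ψ 0 = φ` (i.e. `φ_N`) and `ψ (j+1) (x) = sup_θ ∫ ψ j (x with the (N−j)-th variable replaced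
by y) F_θ(dy)` (i.e. `φ_{N-j-1}`); the sublinear expectation is `Ê[φ(W)] = ψ N` (a constant
function, evaluated anywhere). -/
def backSeq {d N : ℕ} {Θ : Type} (hN : 0 < N) (F : Θ → Measure (Vec d))
    (φ : (Fin N → Vec d) → ℝ) : ℕ → ((Fin N → Vec d) → ℝ)
  | 0 => φ
  | j + 1 => fun w =>
      ⨆ θ : Θ, ∫ y, backSeq hN F φ j
        (Function.update w ⟨(N - 1 - j) % N, Nat.mod_lt _ hN⟩ y) ∂(F θ)

/-- The sublinear expectation `Ê[φ(W)] = φ_0` obtained from the backward recursion. -/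
def EHatLip {d N : ℕ} {Θ : Type} (hN : 0 < N) (F : Θ → Measure (Vec d))
    (φ : (Fin N → Vec d) → ℝ) : ℝ :=
  backSeq hN F φ N (fun _ => 0)

/-!
Let `S = W(Ω)`; by (A1) and closedness, `S = Ā_1 × ⋯ × Ā_N`. The bounded
`1`-Lipschitz function `ψ = min 1 (dist(·, S))` vanishes on `S`, and since every `F_θ` lives on
`Ā_k`, each step of the backward recursion keeps it zero on the remaining coordinates, so
`Ê[ψ(W)] = 0`. Hence `∫ ψ dQ ≤ 0`, i.e. `Q` is concentrated on `S`. Pushing `Q` forward along a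
section of `W`, which is `σ(W)`-measurable because `S` is Borel, gives the required `P`.
-/

section SublinearExpectation

variable {d N : ℕ} {Θ : Type} (hN : 0 < N) (F : Θ → Measure (Vec d)) {A : Fin N → Set (Vec d)}
  {φ : (Fin N → Vec d) → ℝ}

/-- Step `j` of the recursion has integrated out the last `j` coordinates. -/
theorem backSeq_eq_zero_of_eqOn_pi (hA : ∀ θ i, ∀ᵐ y ∂F θ, y ∈ A i)
    (hφ : Set.EqOn φ 0 (Set.univ.pi A)) :
    ∀ j ≤ N, ∀ w : Fin N → Vec d, (∀ i : Fin N, (i : ℕ) < N - j → w i ∈ A i) →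
      backSeq hN F φ j w = 0 := by
  intro j
  induction j with
  | zero => exact fun _ w hw => hφ fun i _ => hw i (by simp)
  | succ j ih =>
    intro hj w hw
    set k : Fin N := ⟨(N - 1 - j) % N, Nat.mod_lt _ hN⟩
    have hk : (k : ℕ) = N - (j + 1) := by
      simp only [k, Nat.mod_eq_of_lt (show N - 1 - j < N by omega)]; omega
    have hint : ∀ θ, ∫ y, backSeq hN F φ j (Function.update w k y) ∂F θ = 0 := fun θ => by
      refine integral_eq_zero_of_ae ?_
      filter_upwards [hA θ k] with y hy
      refine ih (by omega) _ fun i hi => ?_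
      rcases eq_or_ne i k with rfl | hik
      · simpa using hy
      · rw [Function.update_of_ne hik]
        exact hw i (by have := Fin.val_ne_of_ne hik; omega)
    change ⨆ θ, ∫ y, backSeq hN F φ j (Function.update w k y) ∂F θ = 0
    simp only [hint, Real.iSup_const_zero]

theorem EHatLip_eq_zero_of_eqOn_pi (hA : ∀ θ i, ∀ᵐ y ∂F θ, y ∈ A i)
    (hφ : Set.EqOn φ 0 (Set.univ.pi A)) : EHatLip hN F φ = 0 :=
  backSeq_eq_zero_of_eqOn_pi hN F hA hφ N le_rfl _ fun i hi => absurd hi (by omega)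

end SublinearExpectation

theorem ae_mem_closure_of_integral_min_one_infDist_nonpos {X : Type*} [PseudoMetricSpace X]
    [MeasurableSpace X] [OpensMeasurableSpace X] {S : Set X} (hS : S.Nonempty)
    (Q : Measure X) [IsFiniteMeasure Q] (h : ∫ x, min 1 (Metric.infDist x S) ∂Q ≤ 0) :
    ∀ᵐ x ∂Q, x ∈ closure S := by
  set ψ : X → ℝ := fun x => min 1 (Metric.infDist x S)
  have hψ_nonneg : 0 ≤ ψ := fun x => le_min zero_le_one Metric.infDist_nonneg
  have hψ_cont : Continuous ψ := continuous_const.min (Metric.continuous_infDist_pt S)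
  have hψ_int : Integrable ψ Q :=
    (integrable_const (1 : ℝ)).mono' hψ_cont.aestronglyMeasurable
      (ae_of_all _ fun x => by rw [Real.norm_of_nonneg (hψ_nonneg x)]; exact min_le_left _ _)
  have hψ_zero : ψ =ᵐ[Q] 0 :=
    (integral_eq_zero_iff_of_nonneg hψ_nonneg hψ_int).1 (le_antisymm h (integral_nonneg hψ_nonneg))
  filter_upwards [hψ_zero] with x hx
  rw [Metric.mem_closure_iff_infDist_zero hS]
  have : Metric.infDist x S = 0 ∧ Metric.infDist x S ≤ 1 := by simpa [ψ, min_eq_iff] using hx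
  exact this.1

theorem exists_map_eq_of_ae_mem_range {Ω X : Type*} [mX : MeasurableSpace X] {w : Ω → X}
    (hS : MeasurableSet (Set.range w)) (Q : Measure X) [IsProbabilityMeasure Q]
    (hQ : ∀ᵐ x ∂Q, x ∈ Set.range w) :
    ∃ P : @Measure Ω (mX.comap w), @IsProbabilityMeasure Ω (mX.comap w) P ∧
      Q = @Measure.map Ω X (mX.comap w) mX w P := by
  classical
  let : MeasurableSpace Ω := mX.comap w
  have : Nonempty Ω := by
    obtain ⟨x, ⟨ω, -⟩⟩ := hQ.exists
    exact ⟨ω⟩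
  have hw : Measurable w := comap_measurable w
  have hsection : ∀ x ∈ Set.range w, w (Function.invFun w x) = x := fun x => Function.invFun_eq
  have hwg : Measurable (w ∘ Function.invFun w) := by
    have : w ∘ Function.invFun w =
        (Set.range w).piecewise id fun _ => w (Classical.choice ‹_›) := by
      funext x
      by_cases hx : x ∈ Set.range w
      · simp [Set.piecewise_eq_of_mem _ _ _ hx, hsection x hx]
      · simp [Set.piecewise_eq_of_notMem _ _ _ hx, Function.invFun_neg hx]
    rw [this]
    exact measurable_id.piecewise hS measurable_const
  have hg : Measurable (Function.invFun w) := by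
    rw [measurable_iff_comap_le, MeasurableSpace.comap_comp]
    exact measurable_iff_comap_le.1 hwg
  refine ⟨Q.map (Function.invFun w), Measure.isProbabilityMeasure_map hg.aemeasurable, ?_⟩
  rw [Measure.map_map hw hg,
    Measure.map_congr (f := w ∘ Function.invFun w) (g := id) (hQ.mono hsection), Measure.map_id]

theorem law_extension_general
    {Ω : Type} (N d : ℕ) (hN : 0 < N)
    {Θ : Type} [hΘ : Nonempty Θ]
    -- the family `{F_θ : θ ∈ Θ}` of Borel probability measures on `ℝ^d`
    (F : Θ → Measure (Vec d)) (hFprob : ∀ θ, IsProbabilityMeasure (F θ))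
    -- the noises `W_k : Ω → ℝ^d`, `k = 1, …, N`, and `W = (W_1, …, W_N)`
    (W : ℕ → Ω → Vec d)
    -- `Ω` carries the σ-algebra `σ(W)`
    (mΩ : MeasurableSpace Ω)
    (hmΩ : mΩ = MeasurableSpace.comap (fun ω (i : Fin N) => W (i + 1) ω) inferInstance)
    -- (A1): `W(Ω) = A_1 × ⋯ × A_N` with `F_θ(Ā_k) = 1`
    (hA1a : Set.range (fun ω (i : Fin N) => W (i + 1) ω)
      = Set.univ.pi fun i : Fin N => Set.range (W (i + 1)))
    (hA1b : ∀ θ, ∀ i : Fin N, F θ (closure (Set.range (W (i + 1)))) = 1)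
    -- the range of `W` is closed
    (hclosed : IsClosed (Set.range (fun ω (i : Fin N) => W (i + 1) ω))) :
    -- conclusion: (A3) holds
    ∀ Q : Measure (Fin N → Vec d), IsProbabilityMeasure Q →
      (∀ (φ : (Fin N → Vec d) → ℝ) (K : NNReal) (M : ℝ), LipschitzWith K φ →
        (∀ x, |φ x| ≤ M) → ∫ x, φ x ∂Q ≤ EHatLip hN F φ) →
      ∃ P : Measure Ω, IsProbabilityMeasure P ∧
        Q = P.map (fun ω (i : Fin N) => W (i + 1) ω) := by
  intro Q hQ hQA
  subst hmΩ
  set S := Set.range fun ω (i : Fin N) => W (i + 1) ω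
  have hS : Set.univ.pi (fun i : Fin N => closure (Set.range (W (i + 1)))) = S := by
    rw [← closure_pi_set, ← hA1a, hclosed.closure_eq]
  have hF : ∀ θ (i : Fin N), ∀ᵐ y ∂F θ, y ∈ closure (Set.range (W (i + 1))) := fun θ i =>
    mem_ae_iff.2 (@prob_compl_eq_zero_iff _ _ _ _ (hFprob θ) isClosed_closure.measurableSet
      |>.2 (hA1b θ i))
  have hS_ne : S.Nonempty := hS ▸ Set.univ_pi_nonempty_iff.2 fun i =>
    nonempty_of_measure_ne_zero (μ := F hΘ.some) (by simp [hA1b])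
  have hψ_lip : LipschitzWith 1 fun x => min 1 (Metric.infDist x S) :=
    (Metric.lipschitz_infDist_pt S).const_min 1
  have hψ_bdd : ∀ x, |min 1 (Metric.infDist x S)| ≤ 1 := fun x => by
    rw [abs_of_nonneg (le_min zero_le_one Metric.infDist_nonneg)]; exact min_le_left _ _
  have hψ_vanish : Set.EqOn (fun x => min 1 (Metric.infDist x S)) 0
      (Set.univ.pi fun i : Fin N => closure (Set.range (W (i + 1)))) := fun x hx => by
    simp [Metric.infDist_zero_of_mem (hS ▸ hx : x ∈ S)]
  have hQS : ∀ᵐ x ∂Q, x ∈ S := by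
    refine hclosed.closure_eq ▸ ae_mem_closure_of_integral_min_one_infDist_nonpos hS_ne Q ?_
    exact (hQA _ 1 1 hψ_lip hψ_bdd).trans (EHatLip_eq_zero_of_eqOn_pi hN F hF hψ_vanish).le
  exact exists_map_eq_of_ae_mem_range hclosed.measurableSet Q hQS

/-- If Assumption (A1) holds and the range `W(Ω)` is a closed subset of
`ℝ^{d×N}`, then for every `Q ∈ 𝒜` there is a probability measure `P` on `(Ω, σ(W))` with
`Q = P∘W⁻¹`; i.e. Assumption (A3) holds. -/
theorem law_extension
    {Ω : Type} (N d : ℕ) (hN : 0 < N)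
    {Θ : Type} [hΘ : Nonempty Θ]
    -- the family `{F_θ : θ ∈ Θ}` of Borel probability measures on `ℝ^d`
    (F : Θ → Measure (Vec d)) (hFprob : ∀ θ, IsProbabilityMeasure (F θ))
    -- (A2): `sup_θ ∫ |x| F_θ(dx) < ∞`
    (hA2int : ∀ θ, Integrable (fun x => ‖x‖) (F θ))
    (hA2 : BddAbove (Set.range fun θ => ∫ x, ‖x‖ ∂(F θ)))
    -- the noises `W_k : Ω → ℝ^d`, `k = 1, …, N`, and `W = (W_1, …, W_N)`
    (W : ℕ → Ω → Vec d)
    -- `Ω` carries the σ-algebra `σ(W)`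
    (mΩ : MeasurableSpace Ω)
    (hmΩ : mΩ = MeasurableSpace.comap (fun ω (i : Fin N) => W (i + 1) ω) inferInstance)
    -- (A1): `W(Ω) = A_1 × ⋯ × A_N` with `F_θ(Ā_k) = 1`
    (hA1a : Set.range (fun ω (i : Fin N) => W (i + 1) ω)
      = Set.univ.pi fun i : Fin N => Set.range (W (i + 1)))
    (hA1b : ∀ θ, ∀ i : Fin N, F θ (closure (Set.range (W (i + 1)))) = 1)
    -- the range of `W` is closed
    (hclosed : IsClosed (Set.range (fun ω (i : Fin N) => W (i + 1) ω))) :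
    -- conclusion: (A3) holds
    ∀ Q : Measure (Fin N → Vec d), IsProbabilityMeasure Q →
      (∀ (φ : (Fin N → Vec d) → ℝ) (K : NNReal) (M : ℝ), LipschitzWith K φ →
        (∀ x, |φ x| ≤ M) → ∫ x, φ x ∂Q ≤ EHatLip hN F φ) →
      ∃ P : Measure Ω, IsProbabilityMeasure P ∧
        Q = P.map (fun ω (i : Fin N) => W (i + 1) ω) :=
  law_extension_general N d hN (hΘ := hΘ) F hFprob W mΩ hmΩ hA1a hA1b hclosed
end
end

section
/- For the three-point noise problem, the control u* defined by u_0* = 1, u_1* = −(3/5)·sin(πW_1/2)·X_1* − (2/5)·X_1*, u_2* = 0, u_3* = 0 (where X* is the state generated by u*) is an optimal control, and the optimal value is inf_u J(u) = J(u*) = 8/45. -/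
open MeasureTheory

noncomputable section

/-- The sample space: `W = (W_1,…,W_4)` with `W_k ∈ ℝ`. -/
abbrev Omega19 : Type := Fin 4 → ℝ

/-- `F_θ`: the three-point distribution `F_θ({1}) = F_θ({−1}) = θ/2`, `F_θ({0}) = 1 − θ`. -/
def F19 (θ : ℝ) : Measure ℝ :=
  ENNReal.ofReal (θ / 2) • Measure.dirac 1 + ENNReal.ofReal (θ / 2) • Measure.dirac (-1)
    + ENNReal.ofReal (1 - θ) • Measure.dirac 0

/-- One step of the backward recursion defining `Ê`: integrate out the `k`-th noise under
`F_θ` and take the supremum over `θ ∈ [1/3, 2/3]`. -/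
def step19 (k : Fin 4) (g : Omega19 → ℝ) (w : Omega19) : ℝ :=
  sSup ((fun θ => ∫ y, g (Function.update w k y) ∂(F19 θ)) '' Set.Icc (1 / 3 : ℝ) (2 / 3))

/-- The sublinear expectation `Ê[ψ(W)] = ψ_0` from the backward recursion
`ψ_4 = ψ`, `ψ_k = sup_{θ∈[1/3,2/3]} ∫ψ_{k+1} dF_θ`. -/
def EHat19 (g : Omega19 → ℝ) : ℝ :=
  step19 0 (step19 1 (step19 2 (step19 3 g))) (fun _ => 0)

/-- Admissible controls: `u_k` is a Borel function of `(w_1,…,w_k)` of at most quadratic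
growth in each variable (`u_0` is a constant). -/
def Adm19 (u : Fin 4 → Omega19 → ℝ) : Prop :=
  ∀ k : Fin 4, Measurable (u k) ∧
    (∀ w w' : Omega19, (∀ i : Fin 4, i < k → w i = w' i) → u k w = u k w') ∧
    ∃ C : ℝ, ∀ w, |u k w| ≤ C * ∏ i : Fin 4, (if i < k then 1 + |w i| ^ 2 else 1)

/-- `X_1 = 1 + u_0 W_1`. -/
def X1of (u : Fin 4 → Omega19 → ℝ) (w : Omega19) : ℝ := 1 + u 0 w * w 0
/-- `X_2 = sin(πW_1/2)·X_1 + u_1 + (X_1 + u_1)W_2`. -/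
def X2of (u : Fin 4 → Omega19 → ℝ) (w : Omega19) : ℝ :=
  Real.sin (Real.pi / 2 * w 0) * X1of u w + u 1 w + (X1of u w + u 1 w) * w 1
/-- `X_3 = X_2 + u_2 W_3`. -/
def X3of (u : Fin 4 → Omega19 → ℝ) (w : Omega19) : ℝ := X2of u w + u 2 w * w 2
/-- `X_4 = u_3 + X_3 W_4`. -/
def X4of (u : Fin 4 → Omega19 → ℝ) (w : Omega19) : ℝ := u 3 w + X3of u w * w 3

/-- The cost `J(u) = Ê[|X_4|²]`. -/
def J19 (u : Fin 4 → Omega19 → ℝ) : ℝ := EHat19 (fun w => (X4of u w) ^ 2)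

/-- The candidate optimal control: `u_0* = 1`,
`u_1* = −(3/5)sin(πW_1/2)X_1* − (2/5)X_1*` (with `X_1* = 1 + W_1`), `u_2* = u_3* = 0`. -/
def ustar19 : Fin 4 → Omega19 → ℝ := fun k w =>
  if k = 0 then 1
  else if k = 1 then
    -(3 / 5) * Real.sin (Real.pi / 2 * w 0) * (1 + w 0) - (2 / 5) * (1 + w 0)
  else 0

/-!
Every step of the recursion for `Ê` is the larger of the `F_{1/3}`- and `F_{2/3}`-means, since the
`F_θ`-mean is affine in `θ`. Going backwards, the cost-to-go after `W_4` is `u_3² + (2/3) X_3²`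
and after `W_3` it is `(2/3)(X_2² + (2/3) u_2²)`, so `u_2 = u_3 = 0` is optimal. After `W_2` it is
`(2/3)((s X_1 + u_1)² + (2/3)(X_1 + u_1)²)` with `s = sin(π W_1 / 2)`, and completing the square
in `u_1` bounds this by `(4/15)((1 - s) X_1)²`, with equality exactly for `u_1*`. This bound
vanishes at `W_1 = ±1` when `u_0 = 1` and equals `4/15` at `W_1 = 0`, where `F_{1/3}` puts mass
`2/3`: hence `8/45`. By monotonicity of each step, the same chain of bounds holds for every
admissible control.
-/

open Function

lemma integral_F19 {θ : ℝ} (h0 : 0 ≤ θ) (h1 : θ ≤ 1) (f : ℝ → ℝ) :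
    ∫ y, f y ∂F19 θ = θ / 2 * f 1 + θ / 2 * f (-1) + (1 - θ) * f 0 := by
  have hint : ∀ a : ℝ, Integrable f (Measure.dirac a) := fun a =>
    integrable_dirac enorm_lt_top
  rw [F19, integral_add_measure (((hint 1).smul_measure ENNReal.ofReal_ne_top).add_measure
      ((hint (-1)).smul_measure ENNReal.ofReal_ne_top))
      ((hint 0).smul_measure ENNReal.ofReal_ne_top),
    integral_add_measure ((hint 1).smul_measure ENNReal.ofReal_ne_top)
      ((hint (-1)).smul_measure ENNReal.ofReal_ne_top)]
  simp only [integral_smul_measure, integral_dirac, smul_eq_mul]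
  rw [ENNReal.toReal_ofReal (by linarith), ENNReal.toReal_ofReal (by linarith)]

lemma sSup_image_Icc_affine {a b : ℝ} (hab : a ≤ b) (c d : ℝ) :
    sSup ((fun θ => c + θ * d) '' Set.Icc a b) = max (c + a * d) (c + b * d) := by
  refine IsGreatest.csSup_eq ⟨?_, ?_⟩
  · rcases le_total (c + a * d) (c + b * d) with h | h
    · exact ⟨b, ⟨hab, le_rfl⟩, (max_eq_right h).symm⟩
    · exact ⟨a, ⟨le_rfl, hab⟩, (max_eq_left h).symm⟩
  · rintro _ ⟨θ, ⟨haθ, hθb⟩, rfl⟩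
    rcases le_total 0 d with hd | hd
    · exact le_max_of_le_right (by nlinarith)
    · exact le_max_of_le_left (by nlinarith)

def condMean19 (θ : ℝ) (k : Fin 4) (g : Omega19 → ℝ) (w : Omega19) : ℝ :=
  θ / 2 * g (update w k 1) + θ / 2 * g (update w k (-1)) + (1 - θ) * g (update w k 0)

lemma step19_eq_max (k : Fin 4) (g : Omega19 → ℝ) (w : Omega19) :
    step19 k g w = max (condMean19 (1 / 3) k g w) (condMean19 (2 / 3) k g w) := by
  set p := g (update w k 1)
  set q := g (update w k (-1))
  set r := g (update w k 0)
  have hmean : ∀ θ ∈ Set.Icc (1 / 3 : ℝ) (2 / 3),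
      ∫ y, g (update w k y) ∂F19 θ = r + θ * ((p + q) / 2 - r) := fun θ hθ => by
    rw [integral_F19 (by linarith [hθ.1]) (by linarith [hθ.2])]
    ring
  rw [step19, Set.image_congr hmean, sSup_image_Icc_affine (by norm_num)]
  congr 1 <;> simp only [condMean19, p, q, r] <;> ring

lemma condMean19_mono {θ : ℝ} (h0 : 0 ≤ θ) (h1 : θ ≤ 1) (k : Fin 4) :
    Monotone (condMean19 θ k) := fun f g hfg w => by
  unfold condMean19
  gcongr <;> exact hfg _

lemma step19_mono (k : Fin 4) : Monotone (step19 k) := fun f g hfg w => by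
  simp only [step19_eq_max]
  exact max_le_max (condMean19_mono (by norm_num) (by norm_num) k hfg w)
    (condMean19_mono (by norm_num) (by norm_num) k hfg w)

lemma step19_ge_of_nonneg {k : Fin 4} {g : Omega19 → ℝ} (hg : 0 ≤ g) (w : Omega19) :
    2 / 3 * g (update w k 0) ≤ step19 k g w := by
  rw [step19_eq_max]
  refine le_max_of_le_left ?_
  have hp : 0 ≤ g (update w k 1) := hg _
  have hq : 0 ≤ g (update w k (-1)) := hg _
  simp only [condMean19]
  linarith

lemma step19_eq_of_sq_affine {k : Fin 4} {g : Omega19 → ℝ} {w : Omega19} {c a b : ℝ}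
    (hc : 0 ≤ c) (hg : ∀ y, g (update w k y) = c * (a + b * y) ^ 2) :
    step19 k g w = c * (a ^ 2 + 2 / 3 * b ^ 2) := by
  have hmean : ∀ θ, condMean19 θ k g w = c * (a ^ 2 + θ * b ^ 2) := fun θ => by
    simp only [condMean19, hg]
    ring
  rw [step19_eq_max, hmean, hmean, max_eq_right]
  nlinarith [mul_nonneg hc (sq_nonneg b)]

lemma Adm19.apply_update {u : Fin 4 → Omega19 → ℝ} (hu : Adm19 u) {j k : Fin 4}
    (hjk : j ≤ k) (w : Omega19) (y : ℝ) : u j (update w k y) = u j w :=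
  (hu j).2.1 _ _ fun _ hi => update_of_ne (hi.trans_le hjk).ne _ _

lemma X3of_update_three {u : Fin 4 → Omega19 → ℝ} (hu : Adm19 u) (w : Omega19) (y : ℝ) :
    X3of u (update w 3 y) = X3of u w := by
  simp [X3of, X2of, X1of, hu.apply_update, update_of_ne]

lemma step19_three {u : Fin 4 → Omega19 → ℝ} (hu : Adm19 u) :
    step19 3 (fun w => X4of u w ^ 2) = fun w => u 3 w ^ 2 + 2 / 3 * X3of u w ^ 2 := by
  funext w
  rw [step19_eq_of_sq_affine (c := 1) (a := u 3 w) (b := X3of u w) zero_le_one]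
  · ring
  · intro y
    simp [X4of, X3of_update_three hu, hu.apply_update]

lemma step19_two {u : Fin 4 → Omega19 → ℝ} (hu : Adm19 u) :
    step19 2 (fun w => 2 / 3 * X3of u w ^ 2)
      = fun w => 2 / 3 * (X2of u w ^ 2 + 2 / 3 * u 2 w ^ 2) := by
  funext w
  refine step19_eq_of_sq_affine (by norm_num) fun y => ?_
  simp [X3of, X2of, X1of, hu.apply_update, update_of_ne]

lemma step19_one {u : Fin 4 → Omega19 → ℝ} (hu : Adm19 u) :
    step19 1 (fun w => 2 / 3 * X2of u w ^ 2)
      = fun w => 2 / 3 * ((Real.sin (Real.pi / 2 * w 0) * X1of u w + u 1 w) ^ 2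
          + 2 / 3 * (X1of u w + u 1 w) ^ 2) := by
  funext w
  refine step19_eq_of_sq_affine (by norm_num) fun y => ?_
  simp [X2of, X1of, hu.apply_update, update_of_ne]

/-- Minimising over `t` gives the feedback `t = -((3s + 2)/5) x` of `u*`. -/
lemma sq_add_two_thirds_sq_eq (s x t : ℝ) :
    (s * x + t) ^ 2 + 2 / 3 * (x + t) ^ 2
      = 2 / 5 * ((1 - s) * x) ^ 2 + 5 / 3 * (t + (3 * s + 2) / 5 * x) ^ 2 := by
  ring

lemma ustar19_one (w : Omega19) :
    ustar19 1 w = -((3 * Real.sin (Real.pi / 2 * w 0) + 2) / 5) * (1 + w 0) := by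
  simp only [ustar19]
  norm_num
  ring

lemma abs_ustar19_one_le (w : Omega19) : |ustar19 1 w| ≤ 2 * (1 + |w 0| ^ 2) := by
  have hs := Real.abs_sin_le_one (Real.pi / 2 * w 0)
  rw [abs_le] at hs
  calc |ustar19 1 w| = |(3 * Real.sin (Real.pi / 2 * w 0) + 2) / 5| * |1 + w 0| := by
        rw [ustar19_one, abs_mul, abs_neg]
    _ ≤ 1 * (1 + |w 0|) := by
        gcongr
        · exact abs_le.mpr ⟨by linarith, by linarith⟩
        · exact (abs_add_le _ _).trans_eq (by rw [abs_one])
    _ ≤ 2 * (1 + |w 0| ^ 2) := by nlinarith [sq_nonneg (|w 0| - 1)]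

lemma adm19_ustar19 : Adm19 ustar19 := by
  intro k
  fin_cases k
  · exact ⟨measurable_const, fun _ _ _ => rfl, 1, fun w => by simp [ustar19]⟩
  · refine ⟨?_, fun w w' h => ?_, 2, fun w => ?_⟩
    · change Measurable (ustar19 1)
      rw [funext ustar19_one]
      fun_prop
    · simp [ustar19_one, h 0 (by decide)]
    · simpa [Fin.prod_univ_four] using abs_ustar19_one_le w
  · exact ⟨measurable_const, fun _ _ _ => rfl, 0, fun w => by simp [ustar19]⟩
  · exact ⟨measurable_const, fun _ _ _ => rfl, 0, fun w => by simp [ustar19]⟩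

lemma J19_ustar19 : J19 ustar19 = 8 / 45 := by
  have hX1 : ∀ w, X1of ustar19 w = 1 + w 0 := fun w => by simp [X1of, ustar19]
  have h3 : step19 3 (fun w => X4of ustar19 w ^ 2) = fun w => 2 / 3 * X3of ustar19 w ^ 2 := by
    rw [step19_three adm19_ustar19]
    simp [ustar19]
  have h2 : step19 2 (fun w => 2 / 3 * X3of ustar19 w ^ 2)
      = fun w => 2 / 3 * X2of ustar19 w ^ 2 := by
    rw [step19_two adm19_ustar19]
    simp [ustar19]
  have h1 : step19 1 (fun w => 2 / 3 * X2of ustar19 w ^ 2)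
      = fun w => 4 / 15 * ((1 - Real.sin (Real.pi / 2 * w 0)) * (1 + w 0)) ^ 2 := by
    rw [step19_one adm19_ustar19]
    funext w
    rw [sq_add_two_thirds_sq_eq, ustar19_one, hX1]
    ring
  rw [J19, EHat19, h3, h2, h1, step19_eq_max]
  norm_num [condMean19, Real.sin_pi_div_two]

lemma le_J19 {u : Fin 4 → Omega19 → ℝ} (hu : Adm19 u) : 8 / 45 ≤ J19 u := by
  have h3 : (fun w => 2 / 3 * X3of u w ^ 2) ≤ step19 3 (fun w => X4of u w ^ 2) := fun w => by
    rw [step19_three hu]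
    nlinarith [sq_nonneg (u 3 w)]
  have h2 : (fun w => 2 / 3 * X2of u w ^ 2) ≤ step19 2 (fun w => 2 / 3 * X3of u w ^ 2) :=
      fun w => by
    rw [step19_two hu]
    nlinarith [sq_nonneg (u 2 w)]
  have h1 : (fun w => 4 / 15 * ((1 - Real.sin (Real.pi / 2 * w 0)) * X1of u w) ^ 2)
      ≤ step19 1 (fun w => 2 / 3 * X2of u w ^ 2) := fun w => by
    rw [step19_one hu]
    dsimp only
    rw [sq_add_two_thirds_sq_eq]
    nlinarith [sq_nonneg (u 1 w + (3 * Real.sin (Real.pi / 2 * w 0) + 2) / 5 * X1of u w)]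
  have h0 : 8 / 45 ≤ step19 0
      (fun w => 4 / 15 * ((1 - Real.sin (Real.pi / 2 * w 0)) * X1of u w) ^ 2) (fun _ => 0) := by
    refine le_trans ?_ (step19_ge_of_nonneg (fun _ => mul_nonneg (by norm_num) (sq_nonneg _)) _)
    norm_num [X1of]
  calc (8 / 45 : ℝ) ≤ _ := h0
    _ ≤ _ := step19_mono 0 h1 _
    _ ≤ _ := step19_mono 0 (step19_mono 1 h2) _
    _ ≤ J19 u := step19_mono 0 (step19_mono 1 (step19_mono 2 h3)) _

/-- For the three-point noise problem, the control `u*` is admissible and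
optimal, and the optimal value is `J(u*) = 8/45`. -/
theorem three_point_noise_example :
    Adm19 ustar19 ∧ (∀ u, Adm19 u → J19 ustar19 ≤ J19 u) ∧ J19 ustar19 = 8 / 45 :=
  ⟨adm19_ustar19, fun _ hu => J19_ustar19 ▸ le_J19 hu, J19_ustar19⟩

end
end
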